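/- The diverge probability is independent of the stack symbol: Let Δ be a pVPA. For every q ∈ Q and all Z, Z' ∈ Γ∖{⊥}, it holds that Σ_{t∈Q} [qZ↓t] = Σ_{t∈Q} [qZ'↓t]; consequently the diverge probability ⟨q↑⟩ = 1 − Σ_{t∈Q}[qZ↓t] is well-defined independently of the chosen stack symbol Z. -/

import Mathlib

open MeasureTheory Filter
open scoped ENNReal

inductive SymType : Type
  | call
  | int
  | ret
deriving DecidableEq

/-- A probabilistic visibly pushdown automaton (pVPA), without the labelling:
states `Q` partitioned by `stType` into call/internal/return states, initial state `q0`,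
stack alphabet `Γ` with bottom symbol `bot`, and transition probability functions. -/
structure PVPACore (Q Γ : Type) where
  q0 : Q
  bot : Γ
  stType : Q → SymType
  Pcall : Q → PMF (Q × {Z : Γ // Z ≠ bot})
  Pint : Q → PMF Q
  Pret : Q → Γ → PMF Q

/-- Configurations form a countable set; we endow them with the discrete σ-algebra,
so that the product σ-algebra on runs is the cylinder σ-algebra. -/
instance {Q Γ : Type} (b : Γ) : MeasurableSpace (Q × List {Z : Γ // Z ≠ b}) := ⊤

instance {Q : Type} : MeasurableSpace (Q ⊕ Q) := ⊤

namespace PVPACore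

variable {Q Γ : Type}

/-- Configurations: a state together with the stack contents strictly above `⊥`. -/
abbrev Config (Δ : PVPACore Q Γ) : Type := Q × List {Z : Γ // Z ≠ Δ.bot}

/-- Runs: infinite sequences of configurations. -/
abbrev Run (Δ : PVPACore Q Γ) : Type := ℕ → Δ.Config

/-- Stack height of a configuration (`⊥` does not count). -/
def sh {Δ : PVPACore Q Γ} (c : Δ.Config) : ℕ := c.2.length

/-- Transition probabilities of the configuration Markov chain generated by `Δ`. -/
noncomputable def cfgP [DecidableEq Q] [DecidableEq Γ] (Δ : PVPACore Q Γ)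
    (c c' : Δ.Config) : ℝ≥0∞ :=
  match Δ.stType c.1 with
  | SymType.call =>
      match c'.2 with
      | [] => 0
      | Z :: γ => if γ = c.2 then Δ.Pcall c.1 (c'.1, Z) else 0
  | SymType.int => if c'.2 = c.2 then Δ.Pint c.1 c'.1 else 0
  | SymType.ret =>
      match c.2 with
      | [] => if c'.2 = [] then Δ.Pret c.1 Δ.bot c'.1 else 0
      | Z :: γ => if c'.2 = γ then Δ.Pret c.1 Z.1 c'.1 else 0

/-- `μ` is the run measure of `Δ`: the probability measure on runs (with the cylinder
σ-algebra) under which the run starts at `q0⊥` and evolves by the transition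
probabilities `cfgP`; it is characterised by its values on cylinder sets. -/
structure IsRunMeasure [DecidableEq Q] [DecidableEq Γ] (Δ : PVPACore Q Γ)
    (μ : Measure Δ.Run) : Prop where
  prob : IsProbabilityMeasure μ
  cyl : ∀ (w : ℕ → Δ.Config) (n : ℕ),
      μ {ρ : Δ.Run | ∀ i ≤ n, ρ i = w i} =
        (if w 0 = ((Δ.q0, []) : Δ.Config) then 1 else 0) *
          ∏ i ∈ Finset.range n, Δ.cfgP (w i) (w (i + 1))

end PVPACore

/-- `i` is a step position of the height sequence `h`: no later position has
strictly smaller height. -/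
def IsStepSeq (h : ℕ → ℕ) (i : ℕ) : Prop := ∀ n, i ≤ n → h i ≤ h n

/-- The `n`-th step position of the height sequence `h`. -/
noncomputable def nthStep (h : ℕ → ℕ) (n : ℕ) : ℕ := Nat.nth (IsStepSeq h) n

namespace PVPACore

variable {Q Γ : Type}

/-- `i` is a step of the run `ρ`. -/
def IsStepAt (Δ : PVPACore Q Γ) (ρ : Δ.Run) (i : ℕ) : Prop :=
  IsStepSeq (fun n => sh (ρ n)) i

/-- Position of the `n`-th step of `ρ`. -/
noncomputable def stepPos (Δ : PVPACore Q Γ) (ρ : Δ.Run) (n : ℕ) : ℕ :=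
  nthStep (fun k => sh (ρ k)) n

/-- The (extended) state at the `n`-th step of a run: `Sum.inl q` if the `n`-th step
configuration is a non-bottom configuration with state `q`, and `Sum.inr q` if it is
the bottom configuration `q⊥`. -/
noncomputable def V (Δ : PVPACore Q Γ) (n : ℕ) (ρ : Δ.Run) : Q ⊕ Q :=
  match ρ (Δ.stepPos ρ n) with
  | (q, []) => Sum.inr q
  | (q, _ :: _) => Sum.inl q

/-- Weight (product of one-step transition probabilities) of a finite path. -/
noncomputable def pathWeight [DecidableEq Q] [DecidableEq Γ] (Δ : PVPACore Q Γ) :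
    List Δ.Config → ℝ≥0∞
  | [] => 1
  | [_] => 1
  | c :: c' :: w => Δ.cfgP c c' * pathWeight Δ (c' :: w)

/-- A return path from `qZ⊥` to `r⊥`: a finite path starting at `qZ⊥`, ending at `r⊥`,
all of whose strictly intermediate configurations have stack height ≥ 1. -/
def IsRetPath (Δ : PVPACore Q Γ) (q : Q) (Z : {Z : Γ // Z ≠ Δ.bot}) (r : Q)
    (w : List Δ.Config) : Prop :=
  2 ≤ w.length ∧ w.head? = some (q, [Z]) ∧ w.getLast? = some (r, []) ∧
    ∀ i : Fin w.length, 0 < i.1 → i.1 + 1 < w.length → 1 ≤ sh (w.get i)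

/-- The return probability `[qZ↓r]`: the probability, starting from `qZ⊥`, of reaching
`r⊥` while all strictly intermediate configurations have stack height ≥ 1. -/
noncomputable def retProb [DecidableEq Q] [DecidableEq Γ] (Δ : PVPACore Q Γ)
    (q : Q) (Z : {Z : Γ // Z ≠ Δ.bot}) (r : Q) : ℝ≥0∞ :=
  ∑' w : {w : List Δ.Config // Δ.IsRetPath q Z r w}, Δ.pathWeight w.1

/-- The diverge probability `⟨q↑⟩ = 1 - Σ_t [qZ↓t]` (computed using stack symbol `Z`;
it is in fact independent of `Z`). -/
noncomputable def divergeProb [DecidableEq Q] [DecidableEq Γ] (Δ : PVPACore Q Γ)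
    (q : Q) (Z : {Z : Γ // Z ≠ Δ.bot}) : ℝ≥0∞ :=
  1 - ∑' t : Q, Δ.retProb q Z t

end PVPACore

/-- Conditional probability `μ(A | B) = μ(A ∩ B) / μ(B)`. -/
noncomputable def condP {α : Type*} [MeasurableSpace α] (μ : MeasureTheory.Measure α)
    (A B : Set α) : ℝ≥0∞ :=
  μ (A ∩ B) / μ B

/-! Return paths from `qZ⊥` to `t⊥` are exactly the paths that stay above `⊥` followed by a
final pop to `t⊥`. Before that pop the bottom symbol `Z` is never read, so exchanging it for `Z'`
is a weight-preserving bijection onto the corresponding paths from `qZ'⊥`. The final pop does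
read the bottom symbol, but summed over all targets `t` its probability is `1` for a return state
at height one and `0` otherwise, whatever the symbol. -/

namespace List

variable {α : Type*} {f g : α → α}

@[simp] theorem modifyLast_nil (f : α → α) : ([] : List α).modifyLast f = [] := rfl

@[simp] theorem modifyLast_singleton (f : α → α) (a : α) : [a].modifyLast f = [f a] := rfl

theorem modifyLast_cons_of_ne_nil (f : α → α) (a : α) {l : List α} (hl : l ≠ []) :
    (a :: l).modifyLast f = a :: l.modifyLast f :=
  modifyLast_append_of_right_ne_nil f [a] l hl

@[simp] theorem modifyLast_eq_nil_iff {l : List α} : l.modifyLast f = [] ↔ l = [] := by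
  induction l using reverseRecOn <;> simp [modifyLast_concat]

@[simp] theorem length_modifyLast (l : List α) : (l.modifyLast f).length = l.length := by
  induction l using reverseRecOn <;> simp [modifyLast_concat]

theorem modifyLast_modifyLast (l : List α) :
    (l.modifyLast f).modifyLast g = l.modifyLast (g ∘ f) := by
  induction l using reverseRecOn <;> simp [modifyLast_concat]

theorem modifyLast_injective (hf : Function.Injective f) :
    Function.Injective (modifyLast f) := by
  intro l₁ l₂ h
  cases l₁ using reverseRecOn with
  | nil => simpa [eq_comm] using h
  | append_singleton l₁ a =>
    cases l₂ using reverseRecOn with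
    | nil => simp [modifyLast_concat] at h
    | append_singleton l₂ b =>
      obtain ⟨rfl, hab⟩ : l₁ = l₂ ∧ f a = f b := by simpa [modifyLast_concat] using h
      rw [hf hab]

@[simp] theorem modifyLast_id (l : List α) : l.modifyLast id = l := by
  induction l using reverseRecOn <;> simp [modifyLast_concat]

end List

namespace PVPACore

open Function

variable {Q Γ : Type} {Δ : PVPACore Q Γ}

variable (Δ) in
abbrev StackSymbol : Type := {Z : Γ // Z ≠ Δ.bot}

-- The stack lists its top symbol first, so the bottom symbol is the last entry.
variable (Δ) in
def relabelBottom (σ : Δ.StackSymbol → Δ.StackSymbol) (c : Δ.Config) : Δ.Config :=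
  (c.1, c.2.modifyLast σ)

theorem relabelBottom_leftInverse {σ τ : Δ.StackSymbol → Δ.StackSymbol}
    (h : LeftInverse τ σ) :
    LeftInverse (Δ.relabelBottom τ) (Δ.relabelBottom σ) := fun c => by
  simp [relabelBottom, List.modifyLast_modifyLast, h.comp_eq_id]

variable (Δ) in
def IsInnerPath (q : Q) (Z : Δ.StackSymbol) (v : List Δ.Config) : Prop :=
  v.head? = some (q, [Z]) ∧ ∀ c ∈ v, c.2 ≠ []

theorem IsInnerPath.ne_nil {q : Q} {Z : Δ.StackSymbol} {v : List Δ.Config}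
    (hv : Δ.IsInnerPath q Z v) : v ≠ [] := by
  rintro rfl
  simp [IsInnerPath] at hv

theorem isInnerPath_map_relabelBottom_iff {σ : Equiv.Perm Δ.StackSymbol} {q : Q}
    {Z : Δ.StackSymbol} {v : List Δ.Config} :
    Δ.IsInnerPath q (σ Z) (v.map (Δ.relabelBottom σ)) ↔ Δ.IsInnerPath q Z v := by
  have hinj : Injective (Δ.relabelBottom σ) := (relabelBottom_leftInverse σ.left_inv).injective
  have : Δ.relabelBottom σ (q, [Z]) = (q, [σ Z]) := rfl
  unfold IsInnerPath
  rw [List.head?_map, ← this, ← Option.map_some, (Option.map_injective hinj).eq_iff,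
    List.forall_mem_map]
  simp only [relabelBottom, ne_eq, List.modifyLast_eq_nil_iff]

theorem isRetPath_iff_exists {q t : Q} {Z : Δ.StackSymbol} {w : List Δ.Config} :
    Δ.IsRetPath q Z t w ↔ ∃ v, Δ.IsInnerPath q Z v ∧ w = v ++ [(t, [])] := by
  constructor
  · rintro ⟨hlen, hhead, hlast, hmid⟩
    obtain ⟨v, rfl⟩ := List.getLast?_eq_some_iff.1 hlast
    have hv : v ≠ [] := by rintro rfl; simp at hlen
    rw [List.head?_append_of_ne_nil _ hv] at hhead
    refine ⟨v, ⟨hhead, fun c hc => ?_⟩, rfl⟩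
    obtain ⟨i, hi, rfl⟩ := List.getElem_of_mem hc
    rcases Nat.eq_zero_or_pos i with rfl | hi0
    · rw [List.head?_eq_getElem?, List.getElem?_eq_getElem hi, Option.some_inj] at hhead
      simp [hhead]
    · have := hmid ⟨i, by simp; omega⟩ hi0 (by simp; omega)
      simpa [sh, List.getElem_append_left hi, Nat.one_le_iff_ne_zero] using this
  · rintro ⟨v, ⟨hhead, hne⟩, rfl⟩
    have hv : v ≠ [] := by rintro rfl; simp at hhead
    refine ⟨by simpa [Nat.succ_le_iff, List.length_pos_iff],
      by rw [List.head?_append_of_ne_nil _ hv, hhead], by simp, fun i hi0 hi => ?_⟩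
    have hi' : i.1 < v.length := by simpa using hi
    simpa [sh, List.getElem_append_left hi', Nat.one_le_iff_ne_zero] using
      hne _ (List.getElem_mem hi')

def innerPathEquiv (σ : Equiv.Perm Δ.StackSymbol) (q : Q) (Z : Δ.StackSymbol) :
    {v // Δ.IsInnerPath q Z v} ≃ {v // Δ.IsInnerPath q (σ Z) v} :=
  (Equiv.listEquivOfEquiv ⟨Δ.relabelBottom σ, Δ.relabelBottom σ.symm,
      relabelBottom_leftInverse σ.left_inv, relabelBottom_leftInverse σ.right_inv⟩).subtypeEquiv
    fun _ => isInnerPath_map_relabelBottom_iff.symm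

variable [DecidableEq Q] [DecidableEq Γ]

theorem cfgP_relabelBottom {σ : Δ.StackSymbol → Δ.StackSymbol} (hσ : Injective σ)
    {c c' : Δ.Config} (hc : c.2 ≠ []) (hc' : c'.2 ≠ []) :
    Δ.cfgP (Δ.relabelBottom σ c) (Δ.relabelBottom σ c') = Δ.cfgP c c' := by
  obtain ⟨p, γ⟩ := c
  obtain ⟨p', γ'⟩ := c'
  have hinj : ∀ l l' : List Δ.StackSymbol, l.modifyLast σ = l'.modifyLast σ ↔ l = l' :=
    fun _ _ => (List.modifyLast_injective hσ).eq_iff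
  simp only [ne_eq] at hc hc'
  simp only [cfgP, relabelBottom]
  cases Δ.stType p with
  | call =>
    obtain _ | ⟨W, δ⟩ := γ'
    · contradiction
    rcases eq_or_ne δ [] with rfl | hδ
    · simp [hc, Ne.symm hc]
    · simp [List.modifyLast_cons_of_ne_nil _ _ hδ, hinj]
  | int => simp [hinj]
  | ret =>
    obtain _ | ⟨W, δ⟩ := γ
    · contradiction
    rcases eq_or_ne δ [] with rfl | hδ
    · simp [hc']
    · simp [List.modifyLast_cons_of_ne_nil _ _ hδ, hinj]

theorem tsum_cfgP_bot {c : Δ.Config} (hc : c.2 ≠ []) :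
    ∑' t, Δ.cfgP c (t, []) = if Δ.stType c.1 = .ret ∧ c.2.length = 1 then 1 else 0 := by
  obtain ⟨p, γ⟩ := c
  simp only [ne_eq] at hc
  simp only [cfgP]
  cases Δ.stType p with
  | call => simp
  | int => simp [Ne.symm hc]
  | ret =>
    obtain _ | ⟨W, δ⟩ := γ
    · contradiction
    rcases eq_or_ne δ [] with rfl | hδ
    · simp
    · simp [Ne.symm hδ, hδ]

theorem pathWeight_append_singleton {v : List Δ.Config} (hv : v ≠ []) (c : Δ.Config) :
    Δ.pathWeight (v ++ [c]) = Δ.pathWeight v * Δ.cfgP (v.getLast hv) c := by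
  induction v with
  | nil => contradiction
  | cons a t ih =>
    obtain _ | ⟨b, t⟩ := t
    · simp [pathWeight]
    · simp only [List.cons_append, pathWeight] at ih ⊢
      rw [ih (List.cons_ne_nil _ _), List.getLast_cons (List.cons_ne_nil _ _), mul_assoc]

theorem pathWeight_map {f : Δ.Config → Δ.Config} {w : List Δ.Config}
    (hf : ∀ c ∈ w, ∀ c' ∈ w, Δ.cfgP (f c) (f c') = Δ.cfgP c c') :
    Δ.pathWeight (w.map f) = Δ.pathWeight w := by
  induction w with
  | nil => rfl
  | cons a t ih =>
    obtain _ | ⟨b, t⟩ := t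
    · rfl
    · simp only [List.map_cons, pathWeight] at ih ⊢
      rw [hf a (by simp) b (by simp), ih fun c hc c' hc' => hf c (by simp [hc]) c' (by simp [hc'])]

theorem retProb_eq_tsum_isInnerPath (q : Q) (Z : Δ.StackSymbol) (t : Q) :
    Δ.retProb q Z t = ∑' v : {v // Δ.IsInnerPath q Z v},
      Δ.pathWeight v.1 * Δ.cfgP (v.1.getLast v.2.ne_nil) (t, []) := by
  let e : {v // Δ.IsInnerPath q Z v} ≃ {w // Δ.IsRetPath q Z t w} :=
    Equiv.ofBijective (fun v => ⟨v.1 ++ [(t, [])], isRetPath_iff_exists.2 ⟨v.1, v.2, rfl⟩⟩)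
      ⟨fun v v' h => Subtype.ext (List.append_cancel_right (congrArg Subtype.val h)),
        fun w => by
          obtain ⟨v, hv, hw⟩ := isRetPath_iff_exists.1 w.2
          exact ⟨⟨v, hv⟩, Subtype.ext hw.symm⟩⟩
  rw [retProb, ← e.tsum_eq]
  exact tsum_congr fun v => pathWeight_append_singleton _ _

theorem tsum_retProb_eq_tsum_isInnerPath (q : Q) (Z : Δ.StackSymbol) :
    ∑' t, Δ.retProb q Z t = ∑' v : {v // Δ.IsInnerPath q Z v},
      Δ.pathWeight v.1 * ∑' t, Δ.cfgP (v.1.getLast v.2.ne_nil) (t, []) := by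
  simp_rw [retProb_eq_tsum_isInnerPath]
  rw [ENNReal.tsum_comm]
  simp_rw [ENNReal.tsum_mul_left]

theorem tsum_retProb_perm_apply (σ : Equiv.Perm Δ.StackSymbol) (q : Q) (Z : Δ.StackSymbol) :
    ∑' t, Δ.retProb q (σ Z) t = ∑' t, Δ.retProb q Z t := by
  rw [tsum_retProb_eq_tsum_isInnerPath, tsum_retProb_eq_tsum_isInnerPath,
    ← (innerPathEquiv σ q Z).tsum_eq]
  refine tsum_congr fun ⟨v, hv⟩ => ?_
  have hlast : v.getLast hv.ne_nil ∈ v := List.getLast_mem _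
  simp only [innerPathEquiv, Equiv.subtypeEquiv_apply, Equiv.listEquivOfEquiv, Equiv.coe_fn_mk,
    List.getLast_map]
  rw [pathWeight_map fun c hc c' hc' => cfgP_relabelBottom σ.injective (hv.2 c hc) (hv.2 c' hc'),
    tsum_cfgP_bot, tsum_cfgP_bot (hv.2 _ hlast)]
  · simp [relabelBottom]
  · simpa [relabelBottom] using hv.2 _ hlast

end PVPACore

theorem diverge_prob_indep_stack_symbol_general {Q Γ : Type} [DecidableEq Q]
    [DecidableEq Γ]
    (Δ : PVPACore Q Γ)
    (q : Q) (Z Z' : {Z : Γ // Z ≠ Δ.bot}) :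
    (∑' t : Q, Δ.retProb q Z t) = ∑' t : Q, Δ.retProb q Z' t ∧
      Δ.divergeProb q Z = Δ.divergeProb q Z' := by
  have h : ∑' t, Δ.retProb q Z t = ∑' t, Δ.retProb q Z' t := by
    simpa using (Δ.tsum_retProb_perm_apply (Equiv.swap Z Z') q Z).symm
  exact ⟨h, congrArg (1 - ·) h⟩

/-- the diverge probability is independent of the stack symbol:
for every `q ∈ Q` and all non-bottom stack symbols `Z, Z'`,
`Σ_{t∈Q} [qZ↓t] = Σ_{t∈Q} [qZ'↓t]`; hence `⟨q↑⟩ = 1 − Σ_t [qZ↓t]` is well defined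
independently of `Z`. -/
theorem diverge_prob_indep_stack_symbol {Q Γ A : Type} [Fintype Q] [DecidableEq Q]
    [Fintype Γ] [DecidableEq Γ] [Fintype A] (ty : A → SymType)
    (Δ : PVPACore Q Γ) (lab : Q → A) (hlab : ∀ q, ty (lab q) = Δ.stType q)
    (q : Q) (Z Z' : {Z : Γ // Z ≠ Δ.bot}) :
    (∑' t : Q, Δ.retProb q Z t) = ∑' t : Q, Δ.retProb q Z' t ∧
      Δ.divergeProb q Z = Δ.divergeProb q Z' :=
  diverge_prob_indep_stack_symbol_general Δ q Z Z'
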